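/- The translation of simple types into restricted intersection types preserves derivability: if Π ⊢ M : A | Σ in Parigot's simply typed λμ-calculus, then Πᴰ ⊢ᴿ M : Aᴰ | Σᶜ in the restricted intersection type system, where the translations are φᶜ = ψ×ω, (A→B)ᶜ = (Aᶜ→ψ)×Bᶜ, and Aᴰ = Aᶜ→ψ. -/

import Mathlib

-- Terms and commands of the untyped λμ-calculus.
mutual
inductive Trm : Type where
  | var : Nat → Trm
  | lam : Nat → Trm → Trm
  | app : Trm → Trm → Trm
  | mu  : Nat → Cm → Trm
inductive Cm : Type where
  | nam : Nat → Trm → Cm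
end

-- Ordinary term substitution `T[L/x]`.
mutual
def subT : Trm → Nat → Trm → Trm
  | .var y, x, L => if y = x then L else .var y
  | .lam y M, x, L => if y = x then .lam y M else .lam y (subT M x L)
  | .app M N, x, L => .app (subT M x L) (subT N x L)
  | .mu a C, x, L => .mu a (subC C x L)
def subC : Cm → Nat → Trm → Cm
  | .nam a M, x, L => .nam a (subT M x L)
end

-- Structural substitution `T[α ⇐ L]`.
mutual
def ssubT : Trm → Nat → Trm → Trm
  | .var y, _, _ => .var y
  | .lam y M, a, L => .lam y (ssubT M a L)
  | .app M N, a, L => .app (ssubT M a L) (ssubT N a L)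
  | .mu b C, a, L => if b = a then .mu b C else .mu b (ssubC C a L)
def ssubC : Cm → Nat → Trm → Cm
  | .nam b M, a, L =>
      if b = a then .nam b (.app (ssubT M a L) L) else .nam b (ssubT M a L)
end

-- Restricted types: term types δ ::= κ→ψ | δ∧δ ; continuation types
-- κ ::= ω | δ×κ | κ∧κ  (ψ is a single type constant, left implicit in `arr`).
mutual
inductive RTy : Type where
  | arr : RKy → RTy
  | inter : RTy → RTy → RTy
inductive RKy : Type where
  | omega : RKy
  | prod : RTy → RKy → RKy
  | inter : RKy → RKy → RKy
end

-- The restricted preorders ≤ᴿ on term and continuation types.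
mutual
inductive RLeD : RTy → RTy → Prop where
  | refl : ∀ δ, RLeD δ δ
  | trans : ∀ {δ₁ δ₂ δ₃}, RLeD δ₁ δ₂ → RLeD δ₂ δ₃ → RLeD δ₁ δ₃
  | interL : ∀ δ₁ δ₂, RLeD (.inter δ₁ δ₂) δ₁
  | interR : ∀ δ₁ δ₂, RLeD (.inter δ₁ δ₂) δ₂
  | interGlb : ∀ {δ δ₁ δ₂}, RLeD δ δ₁ → RLeD δ δ₂ → RLeD δ (.inter δ₁ δ₂)
  | arr : ∀ {κ₁ κ₂}, RLeC κ₂ κ₁ → RLeD (.arr κ₁) (.arr κ₂)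
inductive RLeC : RKy → RKy → Prop where
  | refl : ∀ κ, RLeC κ κ
  | trans : ∀ {κ₁ κ₂ κ₃}, RLeC κ₁ κ₂ → RLeC κ₂ κ₃ → RLeC κ₁ κ₃
  | interL : ∀ κ₁ κ₂, RLeC (.inter κ₁ κ₂) κ₁
  | interR : ∀ κ₁ κ₂, RLeC (.inter κ₁ κ₂) κ₂
  | interGlb : ∀ {κ κ₁ κ₂}, RLeC κ κ₁ → RLeC κ κ₂ → RLeC κ (.inter κ₁ κ₂)
  | leOmega : ∀ κ, RLeC κ .omega
  | prodDist : ∀ δ₁ κ₁ δ₂ κ₂,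
      RLeC (.inter (.prod δ₁ κ₁) (.prod δ₂ κ₂)) (.prod (.inter δ₁ δ₂) (.inter κ₁ κ₂))
  | prodMono : ∀ {δ₁ δ₂ κ₁ κ₂}, RLeD δ₁ δ₂ → RLeC κ₁ κ₂ →
      RLeC (.prod δ₁ κ₁) (.prod δ₂ κ₂)
end

-- The restricted intersection type assignment system for λμ
-- (bases Γ : Nat → Option RTy, name contexts Δ : Nat → RKy with default ω).
mutual
inductive RTyT : (Nat → Option RTy) → Trm → RTy → (Nat → RKy) → Prop where
  | ax : ∀ {Γ x δ Δ}, Γ x = some δ → RTyT Γ (.var x) δ Δ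
  | abs : ∀ {Γ x δ M κ Δ},
      RTyT (Function.update Γ x (some δ)) M (.arr κ) Δ →
      RTyT Γ (.lam x M) (.arr (.prod δ κ)) Δ
  | app : ∀ {Γ M N δ κ Δ},
      RTyT Γ M (.arr (.prod δ κ)) Δ → RTyT Γ N δ Δ →
      RTyT Γ (.app M N) (.arr κ) Δ
  | mu : ∀ {Γ a C κ κ' Δ},
      RTyC Γ C (.prod (.arr κ') κ') (Function.update Δ a κ) →
      RTyT Γ (.mu a C) (.arr κ) Δ
  | inter : ∀ {Γ M δ₁ δ₂ Δ},
      RTyT Γ M δ₁ Δ → RTyT Γ M δ₂ Δ → RTyT Γ M (.inter δ₁ δ₂) Δ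
  | sub : ∀ {Γ M δ δ' Δ}, RTyT Γ M δ Δ → RLeD δ δ' → RTyT Γ M δ' Δ
inductive RTyC : (Nat → Option RTy) → Cm → RKy → (Nat → RKy) → Prop where
  | cmd : ∀ {Γ M δ a κ Δ}, RTyT Γ M δ Δ → Δ a = κ →
      RTyC Γ (.nam a M) (.prod δ κ) Δ
  | inter : ∀ {Γ C κ₁ κ₂ Δ},
      RTyC Γ C κ₁ Δ → RTyC Γ C κ₂ Δ → RTyC Γ C (.inter κ₁ κ₂) Δ
  | sub : ∀ {Γ C κ κ' Δ}, RTyC Γ C κ Δ → RLeC κ κ' → RTyC Γ C κ' Δ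
end

-- Simple types (logical formulas) A ::= φ | A → B.
inductive STy : Type where
  | atom : Nat → STy
  | arr : STy → STy → STy

-- Parigot's simply typed λμ-calculus.
inductive PTy : (Nat → Option STy) → Trm → STy → (Nat → Option STy) → Prop where
  | ax : ∀ {Pc x A Sc}, Pc x = some A → PTy Pc (.var x) A Sc
  | arrI : ∀ {Pc x A M B Sc},
      PTy (Function.update Pc x (some A)) M B Sc →
      PTy Pc (.lam x M) (.arr A B) Sc
  | arrE : ∀ {Pc M N A B Sc},
      PTy Pc M (.arr A B) Sc → PTy Pc N A Sc →
      PTy Pc (.app M N) B Sc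
  | mu1 : ∀ {Pc M A a Sc},
      PTy Pc M A (Function.update Sc a (some A)) →
      PTy Pc (.mu a (.nam a M)) A Sc
  | mu2 : ∀ {Pc M A B a b Sc}, a ≠ b → Sc b = some B →
      PTy Pc M B (Function.update Sc a (some A)) →
      PTy Pc (.mu a (.nam b M)) A Sc

-- Translation of formulas into restricted continuation and term types:
-- φᶜ = ψ×ω, (A→B)ᶜ = (Aᶜ→ψ)×Bᶜ, Aᴰ = Aᶜ→ψ.
def transC : STy → RKy
  | .atom _ => .prod (.arr .omega) .omega
  | .arr A B => .prod (.arr (transC A)) (transC B)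

def transD (A : STy) : RTy := .arr (transC A)

def transBasis (Pc : Nat → Option STy) : Nat → Option RTy :=
  fun x => (Pc x).map transD

def transCtx (Sc : Nat → Option STy) : Nat → RKy :=
  fun a => (Sc a).elim RKy.omega transC

lemma transBasis_update (Pc : Nat → Option STy) (x : Nat) (A : STy) :
    transBasis (Function.update Pc x (some A)) =
      Function.update (transBasis Pc) x (some (transD A)) := by
  funext y
  by_cases h : y = x <;> simp [transBasis, Function.update, h]

lemma transCtx_update (Sc : Nat → Option STy) (a : Nat) (A : STy) :
    transCtx (Function.update Sc a (some A)) =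
      Function.update (transCtx Sc) a (transC A) := by
  funext b
  by_cases h : b = a <;> simp [transCtx, Function.update, h]

lemma transCtx_of_eq_some {Sc : Nat → Option STy} {b : Nat} {B : STy} (hb : Sc b = some B) :
    transCtx Sc b = transC B := by
  simp [transCtx, hb]

-- The derived rule (μAbs): (Cmd) followed by (μ).
lemma RTyT.mu_nam {Γ : Nat → Option RTy} {Δ : Nat → RKy} {M : Trm} {a b : Nat} {κ κ' : RKy}
    (hM : RTyT Γ M (.arr κ') (Function.update Δ a κ)) (hb : Function.update Δ a κ b = κ') :
    RTyT Γ (.mu a (.nam b M)) (.arr κ) Δ :=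
  RTyT.mu (RTyC.cmd hM hb)

/-- The translation of simple types into restricted intersection types preserves
derivability: Parigot-typeable judgements translate to derivable judgements of
the restricted intersection type system. -/
theorem parigot_translation_preserves_derivability
    (Pc : Nat → Option STy) (M : Trm) (A : STy) (Sc : Nat → Option STy)
    (h : PTy Pc M A Sc) :
    RTyT (transBasis Pc) M (transD A) (transCtx Sc) := by
  induction h with
  | ax hx => exact RTyT.ax (by simp [transBasis, hx])
  | arrI _ ih =>
      rw [transBasis_update] at ih
      exact RTyT.abs ih
  | arrE _ _ ihM ihN => exact RTyT.app ihM ihN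
  | mu1 _ ih =>
      rw [transCtx_update] at ih
      exact RTyT.mu_nam ih (Function.update_self ..)
  | mu2 hab hb _ ih =>
      rw [transCtx_update] at ih
      exact RTyT.mu_nam ih
        ((Function.update_of_ne (Ne.symm hab) ..).trans (transCtx_of_eq_some hb))
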